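/- arXiv:2107.09308 — 2 statements merged into one kernel-verified Lean document; each statement's English description precedes it below -/
import Mathlib

section
/- Let N be a nonempty finite type of servers, let n ≥ 2, let p : ℕ → N → ℝ satisfy p i s ≥ 0 for all i < n and s : N, and ∑_{s : N} p i s = 1 for each i < n, and let t : ℕ → N → N → ℝ. For 0 ≤ a ≤ b ≤ n-1, define the segment average response time T(a,b) = ∑_{g : Fin (b-a+1) → N} (∏_{j=0}^{b-a} p (a+j) (g j)) · (∑_{j=0}^{b-a-1} t (a+j) (g j) (g (j+1))). Then for every k with 0 ≤ k ≤ n-1, the average response time of the whole chain splits at position k: T(0, n-1) = T(0, k) + T(k, n-1). -/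
open Finset

/-- The average response time `T_{a→b}` of the sub-chain from the `a`-th to the
`b`-th function: the expectation over server paths `g` on positions `a, ..., b`
(with probability `∏ j, p (a+j) (g j)`) of the segment total response time. -/
noncomputable def segAvgTime {N : Type*} [Fintype N]
    (p : ℕ → N → ℝ) (t : ℕ → N → N → ℝ) (a b : ℕ) : ℝ :=
  ∑ g : Fin (b - a + 1) → N,
    (∏ j : Fin (b - a + 1), p (a + j) (g j)) *
      (∑ j : Fin (b - a), t (a + j) (g j.castSucc) (g j.succ))

noncomputable def edgeE {N : Type*} [Fintype N]
    (p : ℕ → N → ℝ) (t : ℕ → N → N → ℝ) (i : ℕ) : ℝ :=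
  ∑ u : N, ∑ v : N, p i u * p (i + 1) v * t i u v

lemma marg {N : Type*} [Fintype N] (p : ℕ → N → ℝ) (a m : ℕ)
    (hp : ∀ j < m, ∑ s : N, p (a + j) s = 1) (h : N → ℝ) :
    ∑ g : Fin (m + 1) → N, (∏ j : Fin (m + 1), p (a + (j : ℕ)) (g j)) * h (g (Fin.last m))
      = ∑ u : N, p (a + m) u * h u := by
  rw [← Equiv.sum_comp (Fin.snocEquiv (fun _ => N))]
  rw [Fintype.sum_prod_type]
  simp only [Fin.snocEquiv_apply, Fin.snoc_last, Fin.prod_univ_castSucc, Fin.snoc_castSucc,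
    Fin.coe_castSucc, Fin.val_last]
  rw [Finset.sum_comm]
  have h1 : ∑ g : Fin m → N, ∏ j : Fin m, p (a + (j : ℕ)) (g j) = 1 := by
    rw [← Fintype.piFinset_univ, ← Finset.prod_univ_sum]
    exact Finset.prod_eq_one fun j _ => hp j j.isLt
  calc ∑ g : Fin m → N, ∑ v : N, (∏ j : Fin m, p (a + (j:ℕ)) (g j)) * p (a + m) v * h v
      = ∑ g : Fin m → N, (∏ j : Fin m, p (a + (j:ℕ)) (g j)) * ∑ v : N, p (a + m) v * h v := by
        congr 1; ext g; rw [Finset.mul_sum]; congr 1; ext v; ring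
    _ = ∑ u : N, p (a + m) u * h u := by rw [← Finset.sum_mul, h1, one_mul]

lemma seg_eq {N : Type*} [Fintype N] (p : ℕ → N → ℝ) (t : ℕ → N → N → ℝ) (a m : ℕ)
    (hp : ∀ j ≤ m, ∑ s : N, p (a + j) s = 1) :
    segAvgTime p t a (a + m) = ∑ i ∈ Finset.range m, edgeE p t (a + i) := by
  induction m with
  | zero =>
    unfold segAvgTime
    rw [show a + 0 - a = 0 by omega]
    simp
  | succ m ih =>
    have key : segAvgTime p t a (a + m) = ∑ i ∈ Finset.range m, edgeE p t (a + i) :=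
      ih fun j hj => hp j (by omega)
    unfold segAvgTime
    have hsub : a + (m + 1) - a = m + 1 := by omega
    rw [show a + (m+1) - a = m + 1 by omega]
    rw [← Equiv.sum_comp (Fin.snocEquiv (fun _ => N))]
    rw [Fintype.sum_prod_type]
    simp only [Fin.snocEquiv_apply, Fin.prod_univ_castSucc, Fin.sum_univ_castSucc,
      Fin.snoc_castSucc, Fin.snoc_last, Fin.succ_castSucc, Fin.succ_last,
      Fin.coe_castSucc, Fin.val_last]
    have hm1 : ∑ s : N, p (a + (m + 1)) s = 1 := hp (m + 1) le_rfl
    have hmarg := fun v : N => marg p a m (fun j hj => hp j (by omega))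
      (fun u => t (a + m) u v)
    calc ∑ v : N, ∑ g : Fin (m + 1) → N,
          (∏ j : Fin m, p (a + (j : ℕ)) (g j.castSucc)) * p (a + m) (g (Fin.last m)) *
            p (a + (m + 1)) v *
            (∑ j : Fin m, t (a + (j : ℕ)) (g j.castSucc) (g j.succ)
              + t (a + m) (g (Fin.last m)) v)
        = ∑ v : N, (p (a + (m + 1)) v *
            ∑ g : Fin (m + 1) → N, (∏ j : Fin (m + 1), p (a + (j : ℕ)) (g j)) *
              (∑ j : Fin m, t (a + (j : ℕ)) (g j.castSucc) (g j.succ)))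
          + ∑ v : N, (p (a + (m + 1)) v *
            ∑ g : Fin (m + 1) → N, (∏ j : Fin (m + 1), p (a + (j : ℕ)) (g j)) *
              t (a + m) (g (Fin.last m)) v) := by
          rw [← Finset.sum_add_distrib]
          refine Finset.sum_congr rfl fun v _ => ?_
          rw [Finset.mul_sum, Finset.mul_sum, ← Finset.sum_add_distrib]
          refine Finset.sum_congr rfl fun g _ => ?_
          rw [Fin.prod_univ_castSucc (fun j : Fin (m + 1) => p (a + (j : ℕ)) (g j))]
          simp only [Fin.coe_castSucc, Fin.val_last]
          ring
      _ = segAvgTime p t a (a + m) + ∑ v : N, p (a + (m + 1)) v *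
            ∑ u : N, p (a + m) u * t (a + m) u v := by
          rw [← Finset.sum_mul, hm1, one_mul]
          congr 1
          · unfold segAvgTime
            rw [show a + m - a = m by omega]
          · exact Finset.sum_congr rfl fun v _ => by rw [hmarg v]
      _ = ∑ i ∈ Finset.range (m + 1), edgeE p t (a + i) := by
          rw [Finset.sum_range_succ, key, edgeE, Finset.sum_comm]
          congr 1
          refine Finset.sum_congr rfl fun v _ => ?_
          rw [Finset.mul_sum]
          exact Finset.sum_congr rfl fun u _ => by ring


/-- Equation (19) in the paper's proof of Theorem 1: the average response time
of the whole chain splits at any position `k`: `T(0, n-1) = T(0, k) + T(k, n-1)`. -/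
theorem chain_avg_response_time_split
    {N : Type*} [Fintype N] [Nonempty N] (n : ℕ) (hn : 2 ≤ n)
    (p : ℕ → N → ℝ) (t : ℕ → N → N → ℝ)
    (hp0 : ∀ i < n, ∀ s : N, 0 ≤ p i s)
    (hp1 : ∀ i < n, ∑ s : N, p i s = 1)
    (k : ℕ) (hk : k ≤ n - 1) :
    segAvgTime p t 0 (n - 1) = segAvgTime p t 0 k + segAvgTime p t k (n - 1) := by
  have e0 : segAvgTime p t 0 (n - 1) = ∑ i ∈ Finset.range (n - 1), edgeE p t i := by
    have h := seg_eq p t 0 (n - 1) (fun j hj => by simpa using hp1 j (by omega))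
    simpa using h
  have e1 : segAvgTime p t 0 k = ∑ i ∈ Finset.range k, edgeE p t i := by
    have h := seg_eq p t 0 k (fun j hj => by simpa using hp1 j (by omega))
    simpa using h
  have e2 : segAvgTime p t k (n - 1) = ∑ i ∈ Finset.Ico k (n - 1), edgeE p t i := by
    have h := seg_eq p t k (n - 1 - k) (fun j hj => hp1 (k + j) (by omega))
    rw [show k + (n - 1 - k) = n - 1 by omega] at h
    rw [h, Finset.sum_Ico_eq_sum_range]
  rw [e0, e1, e2, Finset.range_eq_Ico, Finset.range_eq_Ico,
    Finset.sum_Ico_consecutive _ (Nat.zero_le k) hk]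
end

section
/- Let N be a nonempty finite type of servers, let n ≥ 2, let x : ℕ → N → ℝ satisfy x i v ≥ 0 for all i < n and v : N, and ∑_{m : N} x i m > 0 for each i < n, and let t : ℕ → N → N → ℝ. Define the Round-Robin routing probabilities p i v = x i v / (∑_{m : N} x i m). Then the average response time of the chain equals the quadratic sum-of-ratios expression: ∑_{h : Fin n → N} (∏_{i=0}^{n-1} p i (h i)) · (∑_{i=0}^{n-2} t i (h i) (h (i+1))) = ∑_{i=0}^{n-2} ∑_{v : N} ∑_{w : N} (x i v / ∑_{m} x i m) · (x (i+1) w / ∑_{m} x (i+1) m) · t i v w. -/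
open Finset

private lemma sum_pi_prod {N : Type*} [Fintype N] {n : ℕ} (F : Fin n → N → ℝ) :
    ∑ h : Fin n → N, ∏ j, F j (h j) = ∏ j, ∑ v, F j v := by
  rw [Finset.prod_univ_sum, Fintype.piFinset_univ]

private lemma key_marginal {N : Type*} [Fintype N] [DecidableEq N] {n : ℕ} (p : Fin n → N → ℝ)
    (hp : ∀ j, ∑ v, p j v = 1) (a b : Fin n) (hab : a ≠ b) (t' : N → N → ℝ) :
    ∑ h : Fin n → N, (∏ j, p j (h j)) * t' (h a) (h b)
      = ∑ v, ∑ w, p a v * p b w * t' v w := by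
  set Q : N → N → Fin n → N → ℝ := fun v w j u =>
    p j u * (if j = a then (if u = v then 1 else 0)
             else if j = b then (if u = w then 1 else 0) else 1) with hQ
  have step1 : ∀ h : Fin n → N,
      (∏ j, p j (h j)) * t' (h a) (h b)
        = ∑ v, ∑ w, (∏ j, Q v w j (h j)) * t' v w := by
    intro h
    have hprod : ∀ v w, ∏ j, Q v w j (h j)
        = (∏ j, p j (h j)) *
          ((if h a = v then 1 else 0) * (if h b = w then 1 else 0)) := by
      intro v w
      rw [hQ]
      simp only
      rw [Finset.prod_mul_distrib]
      congr 1
      have hsub : ∀ j ∈ (univ : Finset (Fin n)), j ∉ ({a, b} : Finset (Fin n)) →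
          (if j = a then (if h j = v then (1:ℝ) else 0)
           else if j = b then (if h j = w then 1 else 0) else 1) = 1 := by
        intro j _ hj
        simp only [Finset.mem_insert, Finset.mem_singleton, not_or] at hj
        rw [if_neg hj.1, if_neg hj.2]
      rw [← Finset.prod_subset (Finset.subset_univ ({a, b} : Finset (Fin n))) hsub,
        Finset.prod_pair hab, if_pos rfl, if_neg (Ne.symm hab), if_pos rfl]
    simp only [hprod]
    simp [mul_ite, ite_mul, mul_zero, zero_mul, mul_one, Finset.sum_ite_eq]
  simp only [step1]
  rw [Finset.sum_comm]
  refine Finset.sum_congr rfl (fun v _ => ?_)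
  rw [Finset.sum_comm]
  refine Finset.sum_congr rfl (fun w _ => ?_)
  rw [← Finset.sum_mul, sum_pi_prod]
  congr 1
  have hsum : ∀ j, ∑ u, Q v w j u
      = (if j = a then p a v else if j = b then p b w else 1) := by
    intro j
    rw [hQ]
    simp only
    by_cases hja : j = a
    · subst hja
      simp [mul_ite, mul_one, mul_zero, Finset.sum_ite_eq']
    · rw [if_neg hja]
      by_cases hjb : j = b
      · subst hjb
        simp [hja, mul_ite, mul_one, mul_zero, Finset.sum_ite_eq']
      · simp [hja, hjb, hp j]
  simp only [hsum]
  have hsub : ∀ j ∈ (univ : Finset (Fin n)), j ∉ ({a, b} : Finset (Fin n)) →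
      (if j = a then p a v else if j = b then p b w else 1) = 1 := by
    intro j _ hj
    simp only [Finset.mem_insert, Finset.mem_singleton, not_or] at hj
    rw [if_neg hj.1, if_neg hj.2]
  rw [← Finset.prod_subset (Finset.subset_univ ({a, b} : Finset (Fin n))) hsub,
    Finset.prod_pair hab, if_pos rfl, if_neg (Ne.symm hab), if_pos rfl]

/-- Equation (22) of the paper: under Round-Robin routing, where the
probability that the `i`-th function is processed on server `v` is
`x i v / ∑ m, x i m`, the average response time of the chain (originally a sum
over all `|N|^n` response server paths) equals the quadratic sum-of-ratios
expression. -/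
theorem chain_avg_response_time_qsrfp
    {N : Type*} [Fintype N] [Nonempty N] (n : ℕ) (hn : 2 ≤ n)
    (x : ℕ → N → ℝ) (t : ℕ → N → N → ℝ)
    (hx0 : ∀ i < n, ∀ v : N, 0 ≤ x i v)
    (hxpos : ∀ i < n, 0 < ∑ m : N, x i m) :
    ∑ h : Fin n → N,
      (∏ i : Fin n, x i (h i) / ∑ m : N, x i m) *
        (∑ i : Fin (n - 1),
          t i (h ⟨i, by have := i.isLt; omega⟩)
            (h ⟨(i : ℕ) + 1, by have := i.isLt; omega⟩)) =
    ∑ i : Fin (n - 1), ∑ v : N, ∑ w : N,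
      (x i v / ∑ m : N, x i m) *
        (x ((i : ℕ) + 1) w / ∑ m : N, x ((i : ℕ) + 1) m) * t i v w := by
  classical
  set p : ℕ → N → ℝ := fun i v => x i v / ∑ m : N, x i m with hp
  have hp1 : ∀ i < n, ∑ v, p i v = 1 := by
    intro i hi
    rw [hp]
    simp only
    rw [← Finset.sum_div, div_self (ne_of_gt (hxpos i hi))]
  calc ∑ h : Fin n → N,
      (∏ i : Fin n, x i (h i) / ∑ m : N, x i m) *
        (∑ i : Fin (n - 1),
          t i (h ⟨i, by have := i.isLt; omega⟩)
            (h ⟨(i : ℕ) + 1, by have := i.isLt; omega⟩))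
      = ∑ i : Fin (n - 1), ∑ h : Fin n → N,
          (∏ j : Fin n, p j (h j)) *
            t i (h ⟨i, by have := i.isLt; omega⟩)
              (h ⟨(i : ℕ) + 1, by have := i.isLt; omega⟩) := by
        rw [Finset.sum_comm]
        refine Finset.sum_congr rfl (fun h _ => ?_)
        rw [Finset.mul_sum]
    _ = ∑ i : Fin (n - 1), ∑ v : N, ∑ w : N,
      (x i v / ∑ m : N, x i m) *
        (x ((i : ℕ) + 1) w / ∑ m : N, x ((i : ℕ) + 1) m) * t i v w := by
        refine Finset.sum_congr rfl (fun i _ => ?_)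
        have hia : (i : ℕ) < n := by have := i.isLt; omega
        have hib : (i : ℕ) + 1 < n := by have := i.isLt; omega
        have hab : (⟨i, hia⟩ : Fin n) ≠ ⟨(i : ℕ) + 1, hib⟩ := by
          intro hcon
          have := congrArg Fin.val hcon
          simp at this
        have := key_marginal (fun j : Fin n => p j)
          (fun j => hp1 j j.isLt) ⟨i, hia⟩ ⟨(i : ℕ) + 1, hib⟩ hab (t i)
        simpa [hp] using this
end
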